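/- Woodall's conjecture is true if and only if for every undirected graph G and every positive integer τ, every nowhere-zero τ-strongly-connected orientation vector of G (integral x with x_{e⁺}, x_{e⁻} ≥ 1 and x_{e⁺}+x_{e⁻}=τ for all edges e, and x(δ⁺(U)) ≥ τ for all nonempty proper U⊆V) can be decomposed into τ characteristic vectors of strongly connected orientations. -/

import Mathlib

open Finset

/-- The arcs leaving the vertex set `U`. -/
def outArcs {V A : Type*} [DecidableEq V] [Fintype A] (src tgt : A → V) (U : Finset V) :
    Finset A :=
  univ.filter fun a => src a ∈ U ∧ tgt a ∉ U

/-- The arcs entering the vertex set `U`. -/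
def inArcs {V A : Type*} [DecidableEq V] [Fintype A] (src tgt : A → V) (U : Finset V) :
    Finset A :=
  univ.filter fun a => tgt a ∈ U ∧ src a ∉ U

/-- `U` induces a dicut: nonempty, proper, no entering arcs (the dicut is `outArcs U`). -/
def IsDicut {V A : Type*} [Fintype V] [DecidableEq V] [Fintype A] (src tgt : A → V)
    (U : Finset V) : Prop :=
  U.Nonempty ∧ U ≠ univ ∧ inArcs src tgt U = ∅

/-- A dijoin: an arc set meeting every dicut. -/
def IsDijoin {V A : Type*} [Fintype V] [DecidableEq V] [Fintype A] [DecidableEq A] (src tgt : A → V)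
    (J : Finset A) : Prop :=
  ∀ U : Finset V, IsDicut src tgt U → (outArcs src tgt U ∩ J).Nonempty

/-- Source of an arc of the bidirected graph `E × Bool`: `(e, true) = e⁺` goes from `s e` to
`t e`, and `(e, false) = e⁻` goes from `t e` to `s e`. -/
def bsrc {V E : Type*} (s t : E → V) (p : E × Bool) : V := if p.2 then s p.1 else t p.1

/-- Target of an arc of the bidirected graph `E × Bool`. -/
def btgt {V E : Type*} (s t : E → V) (p : E × Bool) : V := if p.2 then t p.1 else s p.1

/-- A strongly connected orientation: a choice `O` of one direction per edge such that every
nonempty proper cut has a leaving arc. -/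
def IsSCO {V E : Type*} [Fintype V] [DecidableEq V] [Fintype E] (s t : E → V)
    (O : E → Bool) : Prop :=
  ∀ U : Finset V, U.Nonempty → U ≠ univ →
    ∃ e : E, (e, O e) ∈ outArcs (bsrc s t) (btgt s t) U

/-- Woodall's conjecture: every digraph in which all dicuts have size at least `τ` contains `τ`
pairwise arc-disjoint dijoins. -/
def WoodallConj : Prop :=
  ∀ (V A : Type) [Fintype V] [DecidableEq V] [Fintype A] [DecidableEq A],
    ∀ (src tgt : A → V) (τ : ℕ),
    (∀ U : Finset V, IsDicut src tgt U → τ ≤ (outArcs src tgt U).card) →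
    ∃ J : Fin τ → Finset A, (∀ i j, i ≠ j → Disjoint (J i) (J j)) ∧
      ∀ i, IsDijoin src tgt (J i)

/-- Every nowhere-zero `τ`-strongly-connected orientation vector of every undirected graph
decomposes into `τ` characteristic vectors of strongly connected orientations. -/
def NZSCODecompProp : Prop :=
  ∀ (V E : Type) [Fintype V] [DecidableEq V] [Fintype E] [DecidableEq E],
    ∀ (s t : E → V) (τ : ℕ), 0 < τ →
    ∀ x : E × Bool → ℤ, (∀ p, 1 ≤ x p) → (∀ e : E, x (e, true) + x (e, false) = (τ : ℤ)) →
    (∀ U : Finset V, U.Nonempty → U ≠ Finset.univ →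
      (τ : ℤ) ≤ ∑ p ∈ outArcs (bsrc s t) (btgt s t) U, x p) →
    ∃ O : Fin τ → (E → Bool), (∀ i, IsSCO s t (O i)) ∧
      ∀ p : E × Bool, x p = ∑ i, (if O i p.1 = p.2 then (1 : ℤ) else 0)

/-!
For `⇐`, given a digraph whose dicuts all have size at least `τ ≥ 2`, weight every arc by `1` and
its reverse by `τ - 1`. This is a nowhere-zero `τ`-SCO vector of the underlying graph: a cut
crossed both ways gets at least `1 + (τ - 1)`, and a cut crossed one way is a dicut on one of its
sides. In a decomposition into `τ` strongly connected orientations every arc is oriented forward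
by exactly one of them, and the forward arcs of a strongly connected orientation form a dijoin.

For `⇒`, subdivide each edge `e` by a new vertex `inr e` and join it by `x e⁺` parallel arcs from
`s e` and `x e⁻` parallel arcs from `t e`. All dicuts of this gadget have at least `τ` arcs, so
Woodall's conjecture gives `τ` disjoint dijoins. The `τ` arcs into `inr e` form a dicut, so each
dijoin contains exactly one of them, which orients `e`. Each dijoin also meets the dicut formed
by a cut `U` of the graph together with the edges inside `U`, so its orientation is strongly
connected.
-/

section Transversal

variable {ι α : Type*} [Fintype ι] [DecidableEq α]

theorem exists_transversal_of_pairwise_disjoint {S : Finset α} {J : ι → Finset α}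
    (hS : #S = Fintype.card ι) (hJ : Pairwise fun i j => Disjoint (J i) (J j))
    (hmeet : ∀ i, (S ∩ J i).Nonempty) :
    ∃ g : ι → α, Function.Injective g ∧ univ.image g = S ∧
      ∀ i, ∀ a ∈ S, a ∈ J i ↔ a = g i := by
  choose g hg using hmeet
  simp only [mem_inter] at hg
  have hinj : Function.Injective g := fun i j hij => by
    by_contra hne
    exact disjoint_left.mp (hJ hne) (hg i).2 (hij ▸ (hg j).2)
  have himage : univ.image g = S :=
    eq_of_subset_of_card_le (image_subset_iff.mpr fun i _ => (hg i).1)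
      (by rw [card_image_of_injective _ hinj, hS, card_univ])
  refine ⟨g, hinj, himage, fun i a ha => ⟨fun hai => ?_, fun h => h ▸ (hg i).2⟩⟩
  obtain ⟨j, -, rfl⟩ := mem_image.mp (himage ▸ ha)
  obtain rfl : i = j := by
    by_contra hne
    exact disjoint_left.mp (hJ hne) hai (hg j).2
  rfl

end Transversal

theorem card_filter_sigma_fst {P : Type*} [Fintype P] (m : P → ℕ) (Q : P → Prop)
    [DecidablePred Q] : #{a : (p : P) × Fin (m p) | Q a.1} = ∑ p with Q p, m p := by
  rw [card_filter, ← univ_sigma_univ, sum_sigma, sum_filter]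
  refine sum_congr rfl fun p _ => ?_
  split_ifs <;> simp

section Digraph

variable {V A : Type*} [DecidableEq V] [Fintype A] {src tgt : A → V} {U : Finset V} {a : A}

@[simp]
theorem mem_outArcs : a ∈ outArcs src tgt U ↔ src a ∈ U ∧ tgt a ∉ U := by
  simp [outArcs]

@[simp]
theorem mem_inArcs : a ∈ inArcs src tgt U ↔ tgt a ∈ U ∧ src a ∉ U := by
  simp [inArcs]

variable [Fintype V] (src tgt)

theorem outArcs_compl (U : Finset V) : outArcs src tgt Uᶜ = inArcs src tgt U := by
  ext a
  simp [and_comm]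

theorem isDicut_compl_of_outArcs_eq_empty {U : Finset V} (hne : U.Nonempty) (hU : U ≠ univ)
    (hout : outArcs src tgt U = ∅) : IsDicut src tgt Uᶜ := by
  refine ⟨by rwa [nonempty_iff_ne_empty, Ne, compl_eq_empty_iff], fun h => ?_, ?_⟩
  · obtain ⟨v, hv⟩ := hne
    exact (mem_compl.mp (h ▸ mem_univ v)) hv
  · rw [← outArcs_compl, compl_compl, hout]

end Digraph

section Bidirected

variable {V E : Type*} (s t : E → V)

theorem bsrc_mem_and_btgt_mem_iff {U : Finset V} (p : E × Bool) :
    bsrc s t p ∈ U ∧ btgt s t p ∈ U ↔ s p.1 ∈ U ∧ t p.1 ∈ U := by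
  rcases p with ⟨e, _ | _⟩ <;> simp [bsrc, btgt, and_comm]

theorem sum_outArcs_bidirected [DecidableEq V] [Fintype E] {M : Type*} [AddCommMonoid M]
    (U : Finset V) (f : E × Bool → M) :
    ∑ p ∈ outArcs (bsrc s t) (btgt s t) U, f p =
      ∑ e ∈ outArcs s t U, f (e, true) + ∑ e ∈ inArcs s t U, f (e, false) := by
  rw [outArcs, outArcs, inArcs, sum_filter, sum_filter, sum_filter, Fintype.sum_prod_type,
    ← sum_add_distrib]
  simp [bsrc, btgt]

end Bidirected

section Backward

variable {V A : Type*} [Fintype V] [DecidableEq V] [Fintype A] (src tgt : A → V)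

theorem isDijoin_of_isSCO [DecidableEq A] {O : A → Bool} (hO : IsSCO src tgt O) :
    IsDijoin src tgt {a | O a = true} := by
  intro U ⟨hne, hU, hin⟩
  obtain ⟨a, ha⟩ := hO U hne hU
  cases hOa : O a <;> rw [hOa, mem_outArcs] at ha <;> simp only [bsrc, btgt] at ha
  · have : a ∈ inArcs src tgt U := by simpa [and_comm] using ha
    simp [hin] at this
  · exact ⟨a, by simpa [hOa] using ha⟩

def forwardOneWeight (τ : ℕ) (p : A × Bool) : ℤ := if p.2 then 1 else τ - 1

variable {src tgt}

theorem le_sum_outArcs_forwardOneWeight {τ : ℕ} (hτ : 2 ≤ τ)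
    (hdicut : ∀ U : Finset V, IsDicut src tgt U → τ ≤ #(outArcs src tgt U))
    {U : Finset V} (hne : U.Nonempty) (hU : U ≠ univ) :
    (τ : ℤ) ≤ ∑ p ∈ outArcs (bsrc src tgt) (btgt src tgt) U, forwardOneWeight τ p := by
  have hsum : ∑ p ∈ outArcs (bsrc src tgt) (btgt src tgt) U, forwardOneWeight τ p =
      #(outArcs src tgt U) + #(inArcs src tgt U) * ((τ : ℤ) - 1) := by
    simp [sum_outArcs_bidirected, forwardOneWeight]
    ring
  rw [hsum]
  have hτ' : (2 : ℤ) ≤ τ := by exact_mod_cast hτ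
  by_cases hin : inArcs src tgt U = ∅
  · have : (τ : ℤ) ≤ #(outArcs src tgt U) := by exact_mod_cast hdicut U ⟨hne, hU, hin⟩
    simp [hin, this]
  by_cases hout : outArcs src tgt U = ∅
  · have h := hdicut Uᶜ (isDicut_compl_of_outArcs_eq_empty src tgt hne hU hout)
    rw [outArcs_compl] at h
    have : (τ : ℤ) ≤ #(inArcs src tgt U) := by exact_mod_cast h
    simp only [hout, card_empty, Nat.cast_zero, zero_add]
    nlinarith
  have h1 : (1 : ℤ) ≤ #(outArcs src tgt U) := by
    exact_mod_cast card_pos.mpr (nonempty_iff_ne_empty.mpr hout)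
  have h2 : (1 : ℤ) ≤ #(inArcs src tgt U) := by
    exact_mod_cast card_pos.mpr (nonempty_iff_ne_empty.mpr hin)
  nlinarith

end Backward

theorem woodallConj_of_nzSCODecompProp (h : NZSCODecompProp) : WoodallConj := by
  intro V A _ _ _ _ src tgt τ hdicut
  rcases le_or_gt τ 1 with hτ | hτ
  · -- `forwardOneWeight 1` vanishes on reversed arcs; here `univ` is the only dijoin needed
    have : Subsingleton (Fin τ) := Fin.subsingleton_iff_le_one.mpr hτ
    refine ⟨fun _ => univ, fun i j hij => absurd (Subsingleton.elim i j) hij, fun i U hU => ?_⟩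
    rw [inter_univ, ← card_pos]
    exact i.pos.trans_le (hdicut U hU)
  obtain ⟨O, hSCO, hx⟩ := h V A src tgt τ (by omega) (forwardOneWeight τ)
    (fun p => by rcases p with ⟨a, _ | _⟩ <;> simp [forwardOneWeight]; omega)
    (fun a => by simp [forwardOneWeight])
    (fun U => le_sum_outArcs_forwardOneWeight hτ hdicut)
  refine ⟨fun i => {a | O i a = true}, fun i j hij => disjoint_left.mpr fun a hai haj => ?_,
    fun i => isDijoin_of_isSCO src tgt (hSCO i)⟩
  -- the arc `a` carries weight `1`, so only one orientation points it forward
  have hone : #{k | O k a = true} = 1 := by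
    simpa [forwardOneWeight, sum_boole] using (hx (a, true)).symm
  rw [mem_filter] at hai haj
  exact hij (card_le_one.mp hone.le i (by simp [hai.2]) j (by simp [haj.2]))

section Gadget

variable {V E : Type*} [DecidableEq V] [DecidableEq E] (s t : E → V) (m : E × Bool → ℕ)

abbrev GadgetArc := (p : E × Bool) × Fin (m p)

def gadgetSrc (a : GadgetArc m) : V ⊕ E := .inl (bsrc s t a.1)

def gadgetTgt (a : GadgetArc m) : V ⊕ E := .inr a.1.1

variable [Fintype E]

theorem card_outArcs_gadget (U' : Finset (V ⊕ E)) :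
    #(outArcs (gadgetSrc s t m) (gadgetTgt m) U') =
      ∑ p with .inl (bsrc s t p) ∈ U' ∧ .inr p.1 ∉ U', m p :=
  card_filter_sigma_fst m fun p => Sum.inl (bsrc s t p) ∈ U' ∧ Sum.inr p.1 ∉ U'

theorem card_filter_gadgetArc_fst_eq (p : E × Bool) : #{a : GadgetArc m | a.1 = p} = m p := by
  rw [card_filter_sigma_fst m (· = p), sum_filter, sum_ite_eq']
  simp

theorem card_filter_gadgetArc_edge_eq (e : E) :
    #{a : GadgetArc m | a.1.1 = e} = m (e, true) + m (e, false) := by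
  rw [card_filter_sigma_fst m (·.1 = e), sum_filter, Fintype.sum_prod_type,
    sum_congr rfl fun e' _ => Fintype.sum_bool _, sum_add_distrib, sum_ite_eq', sum_ite_eq']
  simp

theorem outArcs_gadget_erase_inr [Fintype V] (e : E) :
    outArcs (gadgetSrc s t m) (gadgetTgt m) (univ.erase (.inr e)) =
      ({a | a.1.1 = e} : Finset (GadgetArc m)) := by
  ext a
  simp [gadgetSrc, gadgetTgt]

variable {s t m}

theorem isDicut_gadget_erase_inr [Fintype V] (e : E) :
    IsDicut (gadgetSrc s t m) (gadgetTgt m) (univ.erase (.inr e)) := by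
  refine ⟨⟨.inl (s e), by simp⟩, (erase_ssubset (mem_univ _)).ne, ?_⟩
  ext a
  simp [gadgetSrc, gadgetTgt]

theorem endpoints_mem_toLeft_of_inArcs_gadget_eq_empty (hm : ∀ p, 0 < m p)
    {U' : Finset (V ⊕ E)} (hin : inArcs (gadgetSrc s t m) (gadgetTgt m) U' = ∅) {e : E}
    (he : .inr e ∈ U') : s e ∈ U'.toLeft ∧ t e ∈ U'.toLeft := by
  have hsrc (b : Bool) : bsrc s t (e, b) ∈ U'.toLeft := by
    by_contra h
    have : (⟨(e, b), ⟨0, hm _⟩⟩ : GadgetArc m) ∈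
        inArcs (gadgetSrc s t m) (gadgetTgt m) U' := by
      simpa [gadgetSrc, gadgetTgt, he] using h
    simp [hin] at this
  exact ⟨hsrc true, hsrc false⟩

theorem le_card_outArcs_gadget [Fintype V] {τ : ℕ} (hm : ∀ p, 0 < m p)
    (hsum : ∀ e, m (e, true) + m (e, false) = τ)
    (hcut : ∀ U : Finset V, U.Nonempty → U ≠ univ →
      τ ≤ ∑ p ∈ outArcs (bsrc s t) (btgt s t) U, m p)
    {U' : Finset (V ⊕ E)} (hU' : IsDicut (gadgetSrc s t m) (gadgetTgt m) U') :
    τ ≤ #(outArcs (gadgetSrc s t m) (gadgetTgt m) U') := by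
  obtain ⟨hne, hproper, hin⟩ := hU'
  have hends := fun e => endpoints_mem_toLeft_of_inArcs_gadget_eq_empty hm hin (e := e)
  rw [card_outArcs_gadget]
  by_cases hV : U'.toLeft = univ
  · -- some edge vertex `inr e` lies outside `U'`, and all `τ` arcs into it leave `U'`
    obtain ⟨e, he⟩ : ∃ e : E, .inr e ∉ U' := by
      by_contra! h
      exact hproper (eq_univ_of_forall fun
        | .inl v => mem_toLeft.mp (hV ▸ mem_univ v)
        | .inr e => h e)
    calc τ = ∑ p ∈ {(e, true), (e, false)}, m p := by simp [hsum]
      _ ≤ _ := sum_le_sum_of_subset fun p hp => by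
        rw [mem_filter, ← mem_toLeft, hV]
        rcases mem_insert.mp hp with rfl | hp
        · simp [he]
        · simp [mem_singleton.mp hp, he]
  -- otherwise each arc `p` leaving the proper cut `U'.toLeft` has all its `m p` copies leaving `U'`
  have hne' : U'.toLeft.Nonempty := by
    obtain ⟨_ | e, hz⟩ := hne
    · exact ⟨_, mem_toLeft.mpr hz⟩
    · exact ⟨_, (hends e hz).1⟩
  refine (hcut _ hne' hV).trans (sum_le_sum_of_subset fun p hp => ?_)
  rw [mem_outArcs] at hp
  refine mem_filter.mpr ⟨mem_univ _, mem_toLeft.mp hp.1, fun hp' => hp.2 ?_⟩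
  exact ((bsrc_mem_and_btgt_mem_iff s t p).mpr (hends _ hp')).2

def gadgetCut (s t : E → V) (U : Finset V) : Finset (V ⊕ E) :=
  U.disjSum {e | s e ∈ U ∧ t e ∈ U}

theorem isDicut_gadgetCut [Fintype V] {U : Finset V} (hne : U.Nonempty) (hU : U ≠ univ) :
    IsDicut (gadgetSrc s t m) (gadgetTgt m) (gadgetCut s t U) := by
  obtain ⟨v, hv⟩ := hne
  obtain ⟨w, hw⟩ := not_forall.mp (mt eq_univ_iff_forall.mpr hU)
  refine ⟨⟨.inl v, inl_mem_disjSum.mpr hv⟩,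
    fun h => hw (inl_mem_disjSum.mp (h ▸ mem_univ _)), ?_⟩
  ext a
  simp only [mem_inArcs, gadgetSrc, gadgetTgt, gadgetCut, inl_mem_disjSum, inr_mem_disjSum,
    mem_filter, mem_univ, true_and, notMem_empty, iff_false, not_and, not_not]
  exact fun hends => ((bsrc_mem_and_btgt_mem_iff s t a.1).mpr hends).1

theorem mem_outArcs_of_mem_outArcs_gadgetCut {U : Finset V} {a : GadgetArc m}
    (ha : a ∈ outArcs (gadgetSrc s t m) (gadgetTgt m) (gadgetCut s t U)) :
    a.1 ∈ outArcs (bsrc s t) (btgt s t) U := by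
  simp only [mem_outArcs, gadgetSrc, gadgetTgt, gadgetCut, inl_mem_disjSum, inr_mem_disjSum,
    mem_filter, mem_univ, true_and] at ha ⊢
  exact ⟨ha.1, fun h => ha.2 ((bsrc_mem_and_btgt_mem_iff s t a.1).mp ⟨ha.1, h⟩)⟩

end Gadget

theorem exists_isSCO_decomp_of_woodallConj (hW : WoodallConj) {V E : Type} [Fintype V]
    [DecidableEq V] [Fintype E] [DecidableEq E] (s t : E → V) (τ : ℕ) (m : E × Bool → ℕ)
    (hm : ∀ p, 0 < m p) (hsum : ∀ e, m (e, true) + m (e, false) = τ)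
    (hcut : ∀ U : Finset V, U.Nonempty → U ≠ univ →
      τ ≤ ∑ p ∈ outArcs (bsrc s t) (btgt s t) U, m p) :
    ∃ O : Fin τ → E → Bool, (∀ i, IsSCO s t (O i)) ∧
      ∀ p, #{i | O i p.1 = p.2} = m p := by
  obtain ⟨J, hJ, hdijoin⟩ := hW (V ⊕ E) (GadgetArc m) (gadgetSrc s t m) (gadgetTgt m) τ
    fun U' => le_card_outArcs_gadget hm hsum hcut
  -- the `τ` arcs into `inr e` form a dicut, which each of the disjoint dijoins meets once
  have htransversal (e : E) : ∃ g : Fin τ → GadgetArc m, Function.Injective g ∧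
      univ.image g = ({a | a.1.1 = e} : Finset (GadgetArc m)) ∧
        ∀ i, ∀ a ∈ ({a | a.1.1 = e} : Finset (GadgetArc m)), a ∈ J i ↔ a = g i := by
    refine exists_transversal_of_pairwise_disjoint ?_ hJ fun i => ?_
    · rw [card_filter_gadgetArc_edge_eq, hsum, Fintype.card_fin]
    · have := hdijoin i _ (isDicut_gadget_erase_inr e)
      rwa [outArcs_gadget_erase_inr] at this
  choose g hinj himage hmem using htransversal
  refine ⟨fun i e => (g e i).1.2, fun i U hne hU => ?_, fun p => ?_⟩
  · obtain ⟨a, ha⟩ := hdijoin i _ (isDicut_gadgetCut hne hU)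
    rw [mem_inter] at ha
    refine ⟨a.1.1, ?_⟩
    dsimp only
    rw [← (hmem a.1.1 i a (by simp)).mp ha.2]
    exact mem_outArcs_of_mem_outArcs_gadgetCut ha.1
  · calc #{i | (g p.1 i).1.2 = p.2}
        = #((univ.image (g p.1)).filter (·.1.2 = p.2)) := by
          rw [filter_image, card_image_of_injective _ (hinj _)]
      _ = #{a : GadgetArc m | a.1 = p} := by
          rw [himage, filter_filter]
          congr 1
          ext a
          simp [Prod.ext_iff]
      _ = m p := card_filter_gadgetArc_fst_eq m p

theorem nzSCODecompProp_of_woodallConj (hW : WoodallConj) : NZSCODecompProp := by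
  intro V E _ _ _ _ s t τ _ x hx hsum hcut
  obtain ⟨O, hO, hcount⟩ := exists_isSCO_decomp_of_woodallConj hW s t τ (fun p => (x p).toNat)
    (fun p => by have := hx p; omega)
    (fun e => by have := hsum e; have := hx (e, true); have := hx (e, false); omega)
    (fun U hne hU => by
      have hcast : ((∑ p ∈ outArcs (bsrc s t) (btgt s t) U, (x p).toNat : ℕ) : ℤ) =
          ∑ p ∈ outArcs (bsrc s t) (btgt s t) U, x p := by
        push_cast
        exact sum_congr rfl fun p _ => Int.toNat_of_nonneg (by linarith [hx p])
      have := hcut U hne hU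
      omega)
  refine ⟨O, hO, fun p => ?_⟩
  rw [sum_boole, hcount]
  have := hx p
  omega

/-- Woodall's conjecture is equivalent to: every nowhere-zero `τ`-SCO decomposes into
`τ` SCOs. -/
theorem woodall_iff_nz_sco_decomp : WoodallConj ↔ NZSCODecompProp :=
  ⟨nzSCODecompProp_of_woodallConj, woodallConj_of_nzSCODecompProp⟩
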